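/- arXiv:2501.07455 — 3 statements merged into one kernel-verified Lean document; each statement's English description precedes it below -/
import Mathlib

section
/- Let T be an invertible measure-preserving map on a probability space (Ω, F, ν), let φ ∈ L^∞(ν), let A ∈ ℝ and κ ∈ [0,1] be such that ν{x : φ(x) > A} ≤ κ. Then for every β < A, the measure of the set of forward Pliss points with constant β satisfies ν{x : ∀ j ≥ 0, φ_j(x) ≥ βj} ≥ (∫φ dν − β − κ·‖φ − A‖_∞) / (A − β), where φ_j := φ + φ∘T + ... + φ∘T^{j−1} and φ_0 := 0. -/
open MeasureTheory Filter

section PlissAux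
set_option linter.unusedSectionVars false
variable {Ω : Type*} [MeasurableSpace Ω]

/-- Birkhoff sums of `g` along `T`. -/
private def plissS (T : Ω → Ω) (g : Ω → ℝ) (j : ℕ) (x : Ω) : ℝ :=
  ∑ k ∈ Finset.range j, g (T^[k] x)

private lemma plissS_succ (T : Ω → Ω) (g : Ω → ℝ) (j : ℕ) (x : Ω) :
    plissS T g (j + 1) x = g x + plissS T g j (T x) := by
  simp only [plissS, Finset.sum_range_succ']
  simp [Function.iterate_succ_apply, add_comm]

/-- Running maxima of Birkhoff sums, starting from `0`. -/
private noncomputable def plissM (T : Ω → Ω) (g : Ω → ℝ) : ℕ → Ω → ℝ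
  | 0 => fun _ => 0
  | n + 1 => fun x => max (plissM T g n x) (plissS T g (n + 1) x)

variable (T : Ω → Ω) (g : Ω → ℝ)

private lemma plissM_nonneg : ∀ n x, 0 ≤ plissM T g n x := by
  intro n
  induction n with
  | zero => intro x; simp [plissM]
  | succ n ih => intro x; exact le_trans (ih x) (le_max_left _ _)

private lemma plissM_mono : ∀ m n, m ≤ n → ∀ x, plissM T g m x ≤ plissM T g n x := by
  intro m n hmn
  induction n with
  | zero => intro x; interval_cases m; simp
  | succ n ih =>
    intro x
    rcases Nat.lt_or_ge m (n+1) with h | h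
    · exact le_trans (ih (Nat.lt_succ_iff.mp h) x) (le_max_left _ _)
    · have : m = n + 1 := le_antisymm hmn h
      simp [this]

private lemma plissS_le_plissM : ∀ n j, j ≤ n → ∀ x, plissS T g j x ≤ plissM T g n x := by
  intro n j hj x
  rcases Nat.eq_zero_or_pos j with rfl | hj0
  · simpa [plissS] using plissM_nonneg T g n x
  · obtain ⟨i, rfl⟩ := Nat.exists_eq_add_of_lt hj0
    simp only [zero_add] at *
    calc plissS T g (i + 1) x ≤ plissM T g (i + 1) x := le_max_right _ _
      _ ≤ plissM T g n x := plissM_mono T g _ _ hj x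

private lemma plissM_key : ∀ n x, plissM T g n x ≤ max 0 (g x + plissM T g n (T x)) := by
  intro n
  induction n with
  | zero => intro x; simp [plissM]
  | succ n ih =>
    intro x
    apply max_le
    · exact le_trans (ih x) (max_le_max le_rfl
        (add_le_add le_rfl (plissM_mono T g n (n+1) (Nat.le_succ n) (T x))))
    · rw [plissS_succ]
      exact le_trans (add_le_add le_rfl
        (plissS_le_plissM T g (n+1) n (Nat.le_succ n) (T x))) (le_max_right _ _)

private lemma plissM_pos_exists : ∀ n x, 0 < plissM T g n x → ∃ j, 0 < plissS T g j x := by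
  intro n
  induction n with
  | zero => intro x h; simp [plissM] at h
  | succ n ih =>
    intro x h
    rcases lt_max_iff.mp h with h | h
    · exact ih x h
    · exact ⟨n + 1, h⟩

private lemma plissS_measurable (hT : Measurable T) (hg : Measurable g) (j : ℕ) :
    Measurable (plissS T g j) := by
  apply Finset.measurable_sum
  intro k _
  exact hg.comp (hT.iterate k)

private lemma plissM_measurable (hT : Measurable T) (hg : Measurable g) (n : ℕ) :
    Measurable (plissM T g n) := by
  induction n with
  | zero => exact measurable_const
  | succ n ih => exact ih.max (plissS_measurable T g hT hg (n+1))

/-- Garsia's maximal ergodic theorem. -/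
private lemma pliss_maximal_ergodic (ν : Measure Ω) (hT : MeasurePreserving T ν ν)
    (hg : Measurable g) (hgi : Integrable g ν) :
    0 ≤ ∫ x in {x | ∃ j : ℕ, 0 < plissS T g j x}, g x ∂ν := by
  have hSi : ∀ j, Integrable (plissS T g j) ν := by
    intro j
    apply integrable_finset_sum
    intro k _
    exact ((hT.iterate k).integrable_comp hgi.aestronglyMeasurable).2 hgi
  have hMi : ∀ n, Integrable (plissM T g n) ν := by
    intro n
    induction n with
    | zero => simpa [plissM] using integrable_const (0 : ℝ)
    | succ n ih =>
      have := ih.sup (hSi (n + 1))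
      exact this
  set E : ℕ → Set Ω := fun n => {x | 0 < plissM T g n x} with hE
  have hEm : ∀ n, MeasurableSet (E n) :=
    fun n => measurableSet_lt measurable_const (plissM_measurable T g hT.measurable hg n)
  have hEmono : Monotone E := by
    intro m n hmn x hx
    exact lt_of_lt_of_le hx (plissM_mono T g m n hmn x)
  have hMTi : ∀ n, Integrable (fun x => plissM T g n (T x)) ν := by
    intro n
    have := (hT.integrable_comp (plissM_measurable T g hT.measurable hg n).aestronglyMeasurable).2
      (hMi n)
    simpa [Function.comp_def] using this
  have hMT_int : ∀ n, ∫ x, plissM T g n (T x) ∂ν = ∫ x, plissM T g n x ∂ν := by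
    intro n
    conv_rhs => rw [← hT.map_eq]
    rw [integral_map hT.measurable.aemeasurable
      (plissM_measurable T g hT.measurable hg n).aestronglyMeasurable]
  have key : ∀ n, 0 ≤ ∫ x in E n, g x ∂ν := by
    intro n
    have h1 : ∫ x in E n, (plissM T g n x - plissM T g n (T x)) ∂ν ≤ ∫ x in E n, g x ∂ν := by
      apply setIntegral_mono_on (((hMi n).sub (hMTi n)).integrableOn) hgi.integrableOn (hEm n)
      intro x hx
      show plissM T g n x - plissM T g n (T x) ≤ g x
      have hk := plissM_key T g n x
      have hpos : (0 : ℝ) < plissM T g n x := hx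
      rcases le_or_gt (g x + plissM T g n (T x)) 0 with h | h
      · exfalso
        rw [max_eq_left h] at hk
        exact absurd (lt_of_lt_of_le hpos hk) (lt_irrefl 0)
      · rw [max_eq_right h.le] at hk
        linarith
    have h2 : ∫ x in E n, (plissM T g n x - plissM T g n (T x)) ∂ν
        = ∫ x in E n, plissM T g n x ∂ν - ∫ x in E n, plissM T g n (T x) ∂ν :=
      integral_sub (hMi n).integrableOn (hMTi n).integrableOn
    have h3 : ∫ x in E n, plissM T g n x ∂ν = ∫ x, plissM T g n x ∂ν := by
      have hc : ∫ x in (E n)ᶜ, plissM T g n x ∂ν = 0 := by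
        rw [setIntegral_congr_fun (hEm n).compl (g := fun _ => (0:ℝ))]
        · simp
        · intro x hx
          have : ¬ 0 < plissM T g n x := hx
          exact le_antisymm (not_lt.mp this) (plissM_nonneg T g n x) |>.symm ▸ rfl
      rw [← integral_add_compl (hEm n) (hMi n), hc, add_zero]
    have h4 : ∫ x in E n, plissM T g n (T x) ∂ν ≤ ∫ x, plissM T g n x ∂ν := by
      rw [← hMT_int n]
      exact setIntegral_le_integral (hMTi n)
        (Eventually.of_forall fun x => plissM_nonneg T g n (T x))
    linarith
  have hunion : (⋃ n, E n) = {x | ∃ j : ℕ, 0 < plissS T g j x} := by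
    ext x
    simp only [Set.mem_iUnion, Set.mem_setOf_eq, hE]
    constructor
    · rintro ⟨n, hn⟩
      exact plissM_pos_exists T g n x hn
    · rintro ⟨j, hj⟩
      exact ⟨j, lt_of_lt_of_le hj (plissS_le_plissM T g j j le_rfl x)⟩
  have htend := tendsto_setIntegral_of_monotone hEm hEmono
    (hgi.integrableOn : IntegrableOn g (⋃ n, E n) ν)
  rw [hunion] at htend
  exact ge_of_tendsto' htend key

end PlissAux

/-- **Pliss lemma for measures.** Let `T` be an invertible measure-preserving map on a
probability space `(Ω, F, ν)`, `φ ∈ L^∞(ν)`, `A ∈ ℝ`, `κ ∈ [0,1]` with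
`ν {x | φ x > A} ≤ κ`.  Then for every `β < A` the measure of the set of forward Pliss
points with constant `β` is at least `(∫ φ dν − β − κ ‖φ − A‖_∞) / (A − β)`. -/
theorem pliss_lemma_for_measures
    {Ω : Type*} [MeasurableSpace Ω] (ν : Measure Ω) [IsProbabilityMeasure ν]
    (T : Ω → Ω) (hT : MeasurePreserving T ν ν) (hTbij : Function.Bijective T)
    (φ : Ω → ℝ) (hφ : MemLp φ ⊤ ν)
    (A κ : ℝ) (hκ : κ ∈ Set.Icc (0 : ℝ) 1)
    (hsmall : (ν {x | A < φ x}).toReal ≤ κ)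
    (β : ℝ) (hβ : β < A) :
    (∫ x, φ x ∂ν - β - κ * (eLpNorm (fun x => φ x - A) ⊤ ν).toReal) / (A - β)
      ≤ (ν {x | ∀ j : ℕ, β * j ≤ ∑ k ∈ Finset.range j, φ (T^[k] x)}).toReal := by
  obtain ⟨f, hfmeas, hfeq⟩ : ∃ f : Ω → ℝ, Measurable f ∧ f =ᵐ[ν] φ :=
    ⟨hφ.aestronglyMeasurable.mk φ, hφ.aestronglyMeasurable.stronglyMeasurable_mk.measurable,
      hφ.aestronglyMeasurable.ae_eq_mk.symm⟩
  set C := (eLpNorm (fun x => φ x - A) ⊤ ν).toReal with hC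
  have hC0 : 0 ≤ C := ENNReal.toReal_nonneg
  have hsub : MemLp (fun x => φ x - A) ⊤ ν := hφ.sub (memLp_const A)
  have hbound : ∀ᵐ x ∂ν, |φ x - A| ≤ C := by
    have h1 : ∀ᵐ x ∂ν, (‖φ x - A‖₊ : ENNReal) ≤ eLpNormEssSup (fun x => φ x - A) ν :=
      ae_le_eLpNormEssSup
    have hfin : eLpNormEssSup (fun x => φ x - A) ν ≠ ⊤ := by
      have := hsub.2
      rwa [eLpNorm_exponent_top, lt_top_iff_ne_top] at this
    filter_upwards [h1] with x hx
    have := ENNReal.toReal_mono hfin hx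
    simpa [hC, eLpNorm_exponent_top, Real.norm_eq_abs] using this
  have hfbound : ∀ᵐ x ∂ν, f x - A ≤ C := by
    filter_upwards [hbound, hfeq] with x h1 h2
    rw [h2]
    exact le_trans (le_abs_self _) h1
  have hφint : Integrable φ ν := hφ.integrable le_top
  have hfint : Integrable f ν := hφint.congr hfeq.symm
  set g : Ω → ℝ := fun x => β - f x with hg
  have hgmeas : Measurable g := measurable_const.sub hfmeas
  have hgint : Integrable g ν := (integrable_const β).sub hfint
  have hmax := pliss_maximal_ergodic T g ν hT hgmeas hgint
  have hSval : ∀ j x, plissS T g j x = β * j - ∑ k ∈ Finset.range j, f (T^[k] x) := by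
    intro j x
    simp [plissS, hg, Finset.sum_sub_distrib, Finset.sum_const, Finset.card_range,
      nsmul_eq_mul, mul_comm]
  set Eset := {x | ∃ j : ℕ, 0 < plissS T g j x} with hEset
  have hEmeas : MeasurableSet Eset := by
    rw [hEset, Set.setOf_exists]
    exact MeasurableSet.iUnion fun j =>
      measurableSet_lt measurable_const (plissS_measurable T g hT.measurable hgmeas j)
  set P := Esetᶜ with hP
  have hPmeas : MeasurableSet P := hEmeas.compl
  have hPdef : P = {x | ∀ j : ℕ, β * j ≤ ∑ k ∈ Finset.range j, f (T^[k] x)} := by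
    ext x
    simp [hP, hEset, hSval, not_lt, sub_nonpos]
  -- ∫_P g ≤ ∫ g
  have hsplit : ∫ x in Eset, g x ∂ν + ∫ x in P, g x ∂ν = ∫ x, g x ∂ν :=
    integral_add_compl hEmeas hgint
  have hPle : ∫ x in P, g x ∂ν ≤ ∫ x, g x ∂ν := by linarith
  have hint_g : ∫ x, g x ∂ν = β - ∫ x, f x ∂ν := by
    rw [hg]
    rw [integral_sub (integrable_const β) hfint, integral_const]
    simp
  have hPg : ∫ x in P, g x ∂ν = (ν P).toReal * β - ∫ x in P, f x ∂ν := by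
    rw [hg]
    rw [integral_sub (integrable_const β).integrableOn hfint.integrableOn, setIntegral_const]
    simp [smul_eq_mul, Measure.real]
  have key1 : ∫ x, f x ∂ν - β ≤ ∫ x in P, f x ∂ν - (ν P).toReal * β := by
    rw [hint_g] at hPle
    rw [hPg] at hPle
    linarith
  -- bound ∫_P f
  have hfA : ∫ x in P, f x ∂ν = ∫ x in P, (f x - A) ∂ν + (ν P).toReal * A := by
    rw [integral_sub hfint.integrableOn (integrable_const A).integrableOn, setIntegral_const]
    simp [smul_eq_mul, Measure.real]
  have hAfmeas : MeasurableSet {x | A < f x} := measurableSet_lt measurable_const hfmeas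
  set Q := P ∩ {x | A < f x} with hQ
  have hQmeas : MeasurableSet Q := hPmeas.inter hAfmeas
  have hq1 : ∫ x in P, (f x - A) ∂ν ≤ ∫ x in Q, (f x - A) ∂ν := by
    have hdiff : ∫ x in Q, (f x - A) ∂ν + ∫ x in P \ {x | A < f x}, (f x - A) ∂ν
        = ∫ x in P, (f x - A) ∂ν :=
      integral_inter_add_diff hAfmeas (hfint.sub (integrable_const A)).integrableOn
    have hneg : ∫ x in P \ {x | A < f x}, (f x - A) ∂ν ≤ 0 := by
      apply setIntegral_nonpos (hPmeas.diff hAfmeas)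
      intro x hx
      have : ¬ A < f x := hx.2
      linarith [not_lt.mp this]
    linarith
  have hq2 : ∫ x in Q, (f x - A) ∂ν ≤ C * (ν Q).toReal := by
    calc ∫ x in Q, (f x - A) ∂ν ≤ ∫ x in Q, C ∂ν := by
          apply setIntegral_mono_on_ae (hfint.sub (integrable_const A)).integrableOn
            (integrable_const C).integrableOn hQmeas
          filter_upwards [hfbound] with x h1 _
          exact h1
      _ = C * (ν Q).toReal := by rw [setIntegral_const]; simp [smul_eq_mul, mul_comm, Measure.real]
  have hAset : ν {x | A < f x} = ν {x | A < φ x} := by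
    apply measure_congr
    rw [Filter.eventuallyEq_set]
    filter_upwards [hfeq] with x hx
    simp [hx]
  have hq3 : (ν Q).toReal ≤ κ := by
    have h1 : ν Q ≤ ν {x | A < f x} := measure_mono Set.inter_subset_right
    have h2 : (ν Q).toReal ≤ (ν {x | A < f x}).toReal :=
      ENNReal.toReal_mono (measure_ne_top ν _) h1
    rw [hAset] at h2
    linarith
  -- equality of measures with the φ-defined Pliss set
  set Pt := {x | ∀ j : ℕ, β * j ≤ ∑ k ∈ Finset.range j, φ (T^[k] x)} with hPt
  have haeiter : ∀ᵐ x ∂ν, ∀ k : ℕ, f (T^[k] x) = φ (T^[k] x) := by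
    rw [ae_all_iff]
    intro k
    have := (hT.iterate k).quasiMeasurePreserving.ae_eq_comp hfeq
    exact this
  have hPPt : ν P = ν Pt := by
    apply measure_congr
    rw [Filter.eventuallyEq_set]
    filter_upwards [haeiter] with x hx
    rw [hPdef]
    simp only [Set.mem_setOf_eq, hPt]
    constructor <;> intro h j <;> have := h j <;>
      rwa [Finset.sum_congr rfl fun k _ => (hx k)] at *
  have hintfφ : ∫ x, f x ∂ν = ∫ x, φ x ∂ν := integral_congr_ae hfeq
  -- conclude
  have hQP : (ν P).toReal * A - (ν P).toReal * β = (ν P).toReal * (A - β) := by ring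
  rw [div_le_iff₀ (by linarith : (0:ℝ) < A - β)]
  have hfinal : ∫ x, φ x ∂ν - β ≤ C * κ + (ν Pt).toReal * (A - β) := by
    have hCQ : C * (ν Q).toReal ≤ C * κ := mul_le_mul_of_nonneg_left hq3 hC0
    have hνP : (ν P).toReal = (ν Pt).toReal := by rw [hPPt]
    nlinarith [key1, hfA, hq1, hq2]
  nlinarith [mul_nonneg (sub_nonneg.mpr hκ.1) hC0]
end

section
/- Let B be a countably generated measurable bornology on a measurable subset Z of a measurable space (Ω, F), M a set of probability measures on Ω, and h : M → [0,∞) a function. Then M is partially h-tight (there exist τ ∈ (0,1), h₀ < sup h(M), and a measurable B ∈ B with: h(μ) > h₀ ⟹ μ(B) > τ for all μ ∈ M) if and only if M has an h-gap at infinity, i.e. h^∞_B(M) < sup h(M), where h^∞_B(M) := sup{ limsup_n h(μ_n) : μ_n ∈ M, μ_n → ∞ (B) }. -/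
open MeasureTheory Filter Topology

/-- **Partial tightness ⟺ gap at infinity** (for a countably generated measurable
bornology `B` on a measurable subset `Z` of `Ω`, a family `Mset` of probability measures
and a nonnegative function `h`).  Here a sequence `s` of measures escapes to infinity
relative to `B` iff `s n b → 0` for every measurable `b ∈ B`, and
`h^∞ = ⨆ {limsup h (s n) : s escapes}` (computed in `EReal`, so that `sup ∅ = ⊥`). -/
theorem partially_tight_iff_gap_at_infinity
    {Ω : Type*} [MeasurableSpace Ω]
    (Z : Set Ω) (B : Set (Set Ω))
    (hcover : ∀ z ∈ Z, ∃ b ∈ B, z ∈ b)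
    (hsub : ∀ b ∈ B, b ⊆ Z)
    (hunion : ∀ b₁ ∈ B, ∀ b₂ ∈ B, b₁ ∪ b₂ ∈ B)
    (hhered : ∀ b ∈ B, ∀ b' ⊆ b, b' ∈ B)
    (hmeasble : ∀ b ∈ B, ∃ b' ∈ B, MeasurableSet b' ∧ b ⊆ b')
    (hctble : ∃ A ⊆ B, A.Countable ∧ ∀ b ∈ B, ∃ a ∈ A, b ⊆ a)
    (Mset : Set (Measure Ω)) (hprob : ∀ μ ∈ Mset, IsProbabilityMeasure μ)
    (h : Measure Ω → ℝ) (hnonneg : ∀ μ ∈ Mset, 0 ≤ h μ) :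
    (∃ τ ∈ Set.Ioo (0 : ℝ) 1, ∃ h₀ : ℝ,
        (h₀ : EReal) < (⨆ μ ∈ Mset, (h μ : EReal)) ∧
        ∃ b ∈ B, MeasurableSet b ∧
          ∀ μ ∈ Mset, h₀ < h μ → ENNReal.ofReal τ < μ b) ↔
      (⨆ s : {s : ℕ → Measure Ω // (∀ n, s n ∈ Mset) ∧
            ∀ b ∈ B, MeasurableSet b → Tendsto (fun n => s n b) atTop (𝓝 0)},
          Filter.limsup (fun n => (h (s.1 n) : EReal)) atTop)
        < ⨆ μ ∈ Mset, (h μ : EReal) := by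
  constructor
  · rintro ⟨τ, ⟨hτ0, hτ1⟩, h₀, hh₀, b, hbB, hbm, key⟩
    refine lt_of_le_of_lt (iSup_le ?_) hh₀
    rintro ⟨s, hsM, hesc⟩
    refine Filter.limsup_le_of_le (by isBoundedDefault) ?_
    have hev := (hesc b hbB hbm).eventually_lt_const
      (show (0:ENNReal) < ENNReal.ofReal τ from ENNReal.ofReal_pos.2 hτ0)
    filter_upwards [hev] with n hn
    have : ¬ h₀ < h (s n) := fun hlt => absurd (key (s n) (hsM n) hlt) (not_lt.2 hn.le)
    exact_mod_cast not_lt.1 this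
  · intro hgap
    by_contra hnt
    push_neg at hnt
    have hSne : (⊥:EReal) < ⨆ μ ∈ Mset, (h μ : EReal) := lt_of_le_of_lt bot_le hgap
    obtain ⟨r, hr1, hr2⟩ := EReal.exists_between_coe_real hgap
    rcases Set.eq_empty_or_nonempty B with hB | ⟨b₀, hb₀⟩
    · -- B empty: every sequence escapes vacuously; constant sequences give S ≤ h∞
      refine absurd hgap (not_lt.2 (iSup₂_le fun μ hμ => ?_))
      have hesc : ∀ b ∈ B, MeasurableSet b →
          Tendsto (fun n : ℕ => μ b) atTop (𝓝 0) := by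
        intro b hb; exact absurd hb (by simp [hB])
      have := le_iSup (fun s : {s : ℕ → Measure Ω // (∀ n, s n ∈ Mset) ∧
            ∀ b ∈ B, MeasurableSet b → Tendsto (fun n => s n b) atTop (𝓝 0)} =>
          Filter.limsup (fun n => (h (s.1 n) : EReal)) atTop)
        ⟨fun _ => μ, fun _ => hμ, hesc⟩
      simpa using this
    · obtain ⟨A, hAB, hAc, hbase⟩ := hctble
      have hAne : A.Nonempty := by
        obtain ⟨a, ha, -⟩ := hbase b₀ hb₀; exact ⟨a, ha⟩
      obtain ⟨f, hfA⟩ := hAc.exists_eq_range hAne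
      have hfB : ∀ n, f n ∈ B := fun n => hAB (by rw [hfA]; exact Set.mem_range_self n)
      choose c hcB hcm hfc using fun n => hmeasble (f n) (hfB n)
      let D : ℕ → Set Ω := fun n => Nat.rec (c 0) (fun k Dk => Dk ∪ c (k+1)) n
      have hDB : ∀ n, D n ∈ B := by
        intro n; induction n with
        | zero => exact hcB 0
        | succ k ih => exact hunion _ ih _ (hcB (k+1))
      have hDm : ∀ n, MeasurableSet (D n) := by
        intro n; induction n with
        | zero => exact hcm 0
        | succ k ih => exact ih.union (hcm (k+1))
      have hDmono : Monotone D := monotone_nat_of_le_succ fun n => Set.subset_union_left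
      have hcD : ∀ k, c k ⊆ D k := by
        intro k; cases k with
        | zero => exact subset_rfl
        | succ m => exact Set.subset_union_right
      -- extract the bad sequence
      have hτ : ∀ n : ℕ, (1 / ((n:ℝ) + 2)) ∈ Set.Ioo (0:ℝ) 1 := by
        intro n
        constructor
        · positivity
        · rw [div_lt_one (by positivity)]; linarith [Nat.cast_nonneg (α := ℝ) n]
      choose μs hμM hμh hμb using fun n : ℕ =>
        hnt (1 / ((n:ℝ) + 2)) (hτ n) r hr2 (D n) (hDB n) (hDm n)
      have hesc : ∀ b ∈ B, MeasurableSet b →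
          Tendsto (fun n => μs n b) atTop (𝓝 0) := by
        intro b hb hbm
        obtain ⟨a, haA, hba⟩ := hbase b hb
        obtain ⟨k, rfl⟩ : ∃ k, f k = a := by
          have : a ∈ Set.range f := by rw [← hfA]; exact haA
          exact this
        have hb0 : Tendsto (fun n : ℕ => ENNReal.ofReal (1 / ((n:ℝ) + 1))) atTop (𝓝 0) := by
          rw [show (0:ENNReal) = ENNReal.ofReal 0 by simp]
          exact ENNReal.tendsto_ofReal tendsto_one_div_add_atTop_nhds_zero_nat
        have key : ∀ᶠ n in atTop, μs n b ≤ ENNReal.ofReal (1 / ((n:ℝ) + 1)) := by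
          filter_upwards [eventually_ge_atTop k] with n hkn
          calc μs n b ≤ μs n (D n) :=
              measure_mono (hba.trans ((hfc k).trans ((hcD k).trans (hDmono hkn))))
            _ ≤ ENNReal.ofReal (1 / ((n:ℝ) + 2)) := hμb n
            _ ≤ ENNReal.ofReal (1 / ((n:ℝ) + 1)) := by
              apply ENNReal.ofReal_le_ofReal
              apply one_div_le_one_div_of_le (by positivity)
              linarith
        exact tendsto_of_tendsto_of_tendsto_of_le_of_le' tendsto_const_nhds hb0
          (Filter.Eventually.of_forall fun n => zero_le') key
      have hr_le : (r : EReal) ≤ ⨆ s : {s : ℕ → Measure Ω // (∀ n, s n ∈ Mset) ∧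
            ∀ b ∈ B, MeasurableSet b → Tendsto (fun n => s n b) atTop (𝓝 0)},
          Filter.limsup (fun n => (h (s.1 n) : EReal)) atTop := by
        refine le_trans ?_ (le_iSup _ ⟨μs, hμM, hesc⟩)
        refine le_trans ?_ (Filter.liminf_le_limsup)
        refine Filter.le_liminf_of_le (by isBoundedDefault) ?_
        exact Filter.Eventually.of_forall fun n => by exact_mod_cast (hμh n).le
      exact absurd (lt_of_le_of_lt hr_le hr1) (lt_irrefl _)
end

section
/- Let f be a C¹ diffeomorphism with hyperbolicity data at a point x: suppose T_xM = E^s(x) ⊕ E^u(x) with the Pesin bounds ‖Df^m|_{E^s(x)}‖ ≤ K e^{−mχ} and ‖Df^{−m}|_{E^u(f^m x)}‖ ≤ K e^{εm − mχ} for all m ≥ 0, with 0 < ε < χ. Then the angle α(x) between E^s(x) and E^u(x) satisfies |sin α(x)| ≥ c₁ K^{−c₂}, where c₁, c₂ > 0 depend only on χ − ε (via a lower bound χ̄ ≤ χ − ε used to choose m ≈ log(4K)/χ̄) and on Lip(f). -/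
open Filter Topology

noncomputable section

/-- Forward products of the linear cocycle with generator `A` over the map `f`. -/
def cocycle {E : Type*} [NormedAddCommGroup E] [NormedSpace ℝ E] {M : Type*}
    (f : M → M) (A : M → (E →L[ℝ] E)) : ℕ → M → (E →L[ℝ] E)
  | 0, _ => ContinuousLinearMap.id ℝ E
  | n + 1, x => cocycle f A n (f x) ∘L A x

/-- `Df^k` at `x` (forward derivative cocycle). -/
def fwdC {E : Type*} [NormedAddCommGroup E] [NormedSpace ℝ E] {M : Type*}
    (f : Equiv.Perm M) (Df : M → (E ≃L[ℝ] E)) (k : ℕ) (x : M) : E →L[ℝ] E :=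
  cocycle (⇑f) (fun y => (Df y : E →L[ℝ] E)) k x

/-- The cosine of the minimal angle between two subspaces: the supremum of
`|⟨ξ, η⟩|` over unit vectors `ξ ∈ F`, `η ∈ G`. -/
def maxCos {E : Type*} [NormedAddCommGroup E] [InnerProductSpace ℝ E]
    (F G : Submodule ℝ E) : ℝ :=
  ⨆ p : {p : E × E // p.1 ∈ F ∧ p.2 ∈ G ∧ ‖p.1‖ = 1 ∧ ‖p.2‖ = 1},
    |(inner ℝ p.1.1 p.1.2 : ℝ)|

/-- `|sin α(F,G)|` for the (minimal) angle `α` between the subspaces `F` and `G`. -/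
def sinAngle {E : Type*} [NormedAddCommGroup E] [InnerProductSpace ℝ E]
    (F G : Submodule ℝ E) : ℝ :=
  Real.sqrt (1 - maxCos F G ^ 2)

lemma fwdC_norm_le {E : Type*} [NormedAddCommGroup E] [NormedSpace ℝ E] {M : Type*}
    (f : Equiv.Perm M) (Df : M → (E ≃L[ℝ] E)) (L : ℝ) (hL0 : 0 ≤ L)
    (hb : ∀ y, ‖(Df y : E →L[ℝ] E)‖ ≤ L) :
    ∀ (k : ℕ) (x : M), ‖fwdC f Df k x‖ ≤ L ^ k := by
  intro k
  induction k with
  | zero => intro x; simpa [fwdC, cocycle] using ContinuousLinearMap.norm_id_le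
  | succ n ih =>
    intro x
    calc ‖fwdC f Df (n+1) x‖ ≤ ‖fwdC f Df n (f x)‖ * ‖(Df x : E →L[ℝ] E)‖ := by
          simp only [fwdC, cocycle]; exact ContinuousLinearMap.opNorm_comp_le _ _
      _ ≤ L ^ n * L := mul_le_mul (ih _) (hb x) (norm_nonneg _) (pow_nonneg hL0 n)
      _ = L ^ (n+1) := (pow_succ L n).symm

lemma pair_sep {E : Type} [NormedAddCommGroup E] [InnerProductSpace ℝ E] {M : Type}
    (f : Equiv.Perm M) (Df : M → (E ≃L[ℝ] E)) (L : ℝ) (hL : 1 ≤ L)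
    (hDf : ∀ y, ‖(Df y : E →L[ℝ] E)‖ ≤ L) (x : M) (Es Eu : Submodule ℝ E)
    (χ ε K : ℝ) (hK : 1 ≤ K)
    (hstable : ∀ m : ℕ, ∀ v ∈ Es, ‖fwdC f Df m x v‖ ≤ K * Real.exp (-(m:ℝ)*χ) * ‖v‖)
    (hunstable : ∀ m : ℕ, ∀ v ∈ Eu, ‖v‖ ≤ K * Real.exp ((ε-χ)*m) * ‖fwdC f Df m x v‖)
    (m : ℕ) (hχ0 : 0 ≤ χ) (hm : 2*K^2 ≤ Real.exp ((χ - ε) * m))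
    {ξ η : E} (hξ : ξ ∈ Es) (hη : η ∈ Eu) (hξ1 : ‖ξ‖ = 1) (hη1 : ‖η‖ = 1) :
    (L ^ m)⁻¹ ≤ ‖η - ξ‖ := by
  have hK0 : (0:ℝ) < K := lt_of_lt_of_le one_pos hK
  have hLm : (0:ℝ) < L ^ m := pow_pos (lt_of_lt_of_le one_pos hL) m
  set N := ‖fwdC f Df m x η‖ with hN
  have hs : ‖fwdC f Df m x ξ‖ ≤ K := by
    have h := hstable m ξ hξ
    rw [hξ1, mul_one] at h
    have he1 : Real.exp (-(m:ℝ)*χ) ≤ 1 := by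
      rw [Real.exp_le_one_iff]
      have : (0:ℝ) ≤ (m:ℝ)*χ := mul_nonneg (Nat.cast_nonneg m) hχ0
      linarith
    nlinarith
  have hu : 2*K ≤ N := by
    have h1 := hunstable m η hη
    rw [hη1] at h1
    have hee : Real.exp ((χ-ε)*m) * Real.exp ((ε-χ)*m) = 1 := by
      rw [← Real.exp_add]
      have : (χ-ε)*(m:ℝ) + (ε-χ)*m = 0 := by ring
      rw [this, Real.exp_zero]
    have h2 : Real.exp ((χ-ε)*m) ≤ K * N := by
      have h3 := mul_le_mul_of_nonneg_left h1 (Real.exp_pos ((χ-ε)*(m:ℝ))).le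
      calc Real.exp ((χ-ε)*(m:ℝ)) = Real.exp ((χ-ε)*(m:ℝ)) * 1 := (mul_one _).symm
        _ ≤ Real.exp ((χ-ε)*(m:ℝ)) * (K * Real.exp ((ε-χ)*m) * N) := h3
        _ = (Real.exp ((χ-ε)*(m:ℝ)) * Real.exp ((ε-χ)*m)) * (K * N) := by ring
        _ = K * N := by rw [hee, one_mul]
    nlinarith
  have hdiff : N - ‖fwdC f Df m x ξ‖ ≤ L ^ m * ‖η - ξ‖ := by
    have h1 : N - ‖fwdC f Df m x ξ‖ ≤ ‖fwdC f Df m x η - fwdC f Df m x ξ‖ :=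
      norm_sub_norm_le _ _
    have h2 : fwdC f Df m x η - fwdC f Df m x ξ = fwdC f Df m x (η - ξ) :=
      (map_sub _ _ _).symm
    have h3 : ‖fwdC f Df m x (η - ξ)‖ ≤ ‖fwdC f Df m x‖ * ‖η - ξ‖ :=
      ContinuousLinearMap.le_opNorm _ _
    have h4 : ‖fwdC f Df m x‖ * ‖η - ξ‖ ≤ L ^ m * ‖η - ξ‖ :=
      mul_le_mul_of_nonneg_right (fwdC_norm_le f Df L (le_trans zero_le_one hL) hDf m x)
        (norm_nonneg _)
    rw [h2] at h1
    linarith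
  have h5 : 1 ≤ L ^ m * ‖η - ξ‖ := by nlinarith
  rw [inv_eq_one_div, div_le_iff₀ hLm]
  linarith [h5, mul_comm (L ^ m) ‖η - ξ‖]

/-- **Lower bound on the angle between the stable and unstable subspaces** (from the
proof of Lemma 7.4).  There are constants `c₁, c₂ > 0`, depending only on a lower bound
`χbar ≤ χ − ε` and on a Lipschitz bound `L` for the derivative, such that whenever a
point `x` carries a splitting `Es ⊕ Eu` with the Pesin bounds
`‖Df^m|_{Es}‖ ≤ K e^{−mχ}` and `‖Df^{−m}|_{Eu(f^m x)}‖ ≤ K e^{(ε−χ)m}` (`0 < ε < χ`),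
the angle `α(x)` between `Es` and `Eu` satisfies `|sin α(x)| ≥ c₁ K^{−c₂}`. -/
theorem angle_lower_bound (χbar L : ℝ) (hχbar : 0 < χbar) (hL : 1 ≤ L) :
    ∃ c₁ > (0 : ℝ), ∃ c₂ > (0 : ℝ),
      ∀ (E : Type) [NormedAddCommGroup E] [InnerProductSpace ℝ E]
        (M : Type) (f : Equiv.Perm M) (Df : M → (E ≃L[ℝ] E)),
        (∀ y : M, ‖(Df y : E →L[ℝ] E)‖ ≤ L) →
        ∀ (x : M) (Es Eu : Submodule ℝ E), Es ≠ ⊥ → Eu ≠ ⊥ → IsCompl Es Eu →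
        ∀ χ ε K : ℝ, 1 ≤ K → 0 < ε → ε < χ → χbar ≤ χ - ε →
        (∀ (m : ℕ), ∀ v ∈ Es, ‖fwdC f Df m x v‖ ≤ K * Real.exp (-(m : ℝ) * χ) * ‖v‖) →
        (∀ (m : ℕ), ∀ v ∈ Eu, ‖v‖ ≤ K * Real.exp ((ε - χ) * m) * ‖fwdC f Df m x v‖) →
        c₁ * K ^ (-c₂) ≤ sinAngle Es Eu := by
  have hL0 : (0:ℝ) < L := lt_of_lt_of_le one_pos hL
  set a := Real.log L with ha
  have ha0 : 0 ≤ a := Real.log_nonneg hL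
  refine ⟨(Real.sqrt 2 * L * Real.exp (Real.log 2 * a / χbar))⁻¹, by positivity,
    2 * a / χbar + 1, by positivity, ?_⟩
  intro E _ _ M f Df hDf x Es Eu hEs hEu hcompl χ ε K hK hε hεχ hχε hstable hunstable
  have hK0 : (0:ℝ) < K := lt_of_lt_of_le one_pos hK
  set c₂ := 2 * a / χbar + 1 with hc₂
  set m := ⌈Real.log (2 * K ^ 2) / χbar⌉₊ with hmdef
  have h2K2 : (1:ℝ) ≤ 2 * K ^ 2 := by nlinarith
  have hlogKK : (0:ℝ) ≤ Real.log (2 * K ^ 2) := Real.log_nonneg h2K2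
  have hquot0 : 0 ≤ Real.log (2 * K ^ 2) / χbar := div_nonneg hlogKK hχbar.le
  have hm2 : 2 * K ^ 2 ≤ Real.exp ((χ - ε) * m) := by
    have h := Nat.le_ceil (Real.log (2 * K ^ 2) / χbar)
    rw [div_le_iff₀ hχbar] at h
    have h2 : Real.log (2 * K ^ 2) ≤ (χ - ε) * m := by
      have : χbar * (m:ℝ) ≤ (χ - ε) * m :=
        mul_le_mul_of_nonneg_right hχε (Nat.cast_nonneg m)
      nlinarith [mul_comm (m:ℝ) χbar]
    calc 2*K^2 = Real.exp (Real.log (2*K^2)) := (Real.exp_log (by nlinarith)).symm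
      _ ≤ _ := Real.exp_le_exp.mpr h2
  set r := ((L:ℝ) ^ m)⁻¹ with hr
  have hLm1 : (1:ℝ) ≤ L ^ m := one_le_pow₀ hL
  have hLmpos : (0:ℝ) < L ^ m := by positivity
  have hr0 : 0 < r := by positivity
  have hr1 : r ≤ 1 := inv_le_one_of_one_le₀ hLm1
  -- inner product bound for unit pairs
  have hpair : ∀ ξ ∈ Es, ∀ η ∈ Eu, ‖ξ‖ = 1 → ‖η‖ = 1 →
      (inner ℝ ξ η : ℝ) ≤ 1 - r^2/2 := by
    intro ξ hξ η hη hξ1 hη1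
    have hsep := pair_sep f Df L hL hDf x Es Eu χ ε K hK hstable hunstable m
      (by linarith) hm2 hξ hη hξ1 hη1
    have hnorm : ‖η - ξ‖ ^ 2 = 2 - 2 * (inner ℝ ξ η : ℝ) := by
      rw [norm_sub_sq_real, hξ1, hη1, real_inner_comm]; ring
    have hge : r ^ 2 ≤ ‖η - ξ‖ ^ 2 := by
      have := norm_nonneg (η - ξ)
      nlinarith
    nlinarith
  -- maxCos bounds
  have hbdd : BddAbove (Set.range fun p : {p : E × E // p.1 ∈ Es ∧ p.2 ∈ Eu ∧
      ‖p.1‖ = 1 ∧ ‖p.2‖ = 1} => |(inner ℝ p.1.1 p.1.2 : ℝ)|) := by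
    refine ⟨1, ?_⟩
    rintro y ⟨p, rfl⟩
    calc |(inner ℝ p.1.1 p.1.2 : ℝ)| ≤ ‖p.1.1‖ * ‖p.1.2‖ := abs_real_inner_le_norm _ _
      _ = 1 := by rw [p.2.2.2.1, p.2.2.2.2]; ring
  have hub : maxCos Es Eu ≤ 1 - r^2/2 := by
    apply Real.iSup_le
    · rintro ⟨⟨ξ, η⟩, hξ, hη, hξ1, hη1⟩
      rw [abs_le]
      constructor
      · have h := hpair ξ hξ (-η) (neg_mem hη) hξ1 (by rw [norm_neg]; exact hη1)
        rw [inner_neg_right] at h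
        simpa using by linarith
      · exact hpair ξ hξ η hη hξ1 hη1
    · nlinarith
  have hlb : 0 ≤ maxCos Es Eu := by
    obtain ⟨v, hvEs, hv0⟩ := Submodule.exists_mem_ne_zero_of_ne_bot hEs
    obtain ⟨w, hwEu, hw0⟩ := Submodule.exists_mem_ne_zero_of_ne_bot hEu
    have hξ0 : (‖v‖⁻¹ • v) ∈ Es := Submodule.smul_mem _ _ hvEs
    have hη0 : (‖w‖⁻¹ • w) ∈ Eu := Submodule.smul_mem _ _ hwEu
    have hξ1 : ‖‖v‖⁻¹ • v‖ = 1 := norm_smul_inv_norm hv0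
    have hη1 : ‖‖w‖⁻¹ • w‖ = 1 := norm_smul_inv_norm hw0
    refine le_trans (abs_nonneg (inner ℝ (‖v‖⁻¹ • v) (‖w‖⁻¹ • w) : ℝ)) ?_
    exact le_ciSup hbdd ⟨(‖v‖⁻¹ • v, ‖w‖⁻¹ • w), hξ0, hη0, hξ1, hη1⟩
  -- sinAngle lower bound by r/√2
  have hsin : Real.sqrt (r^2/2) ≤ sinAngle Es Eu := by
    apply Real.sqrt_le_sqrt
    nlinarith [hub, hlb, hr1, hr0.le]
  have heq : Real.sqrt (r^2/2) = r / Real.sqrt 2 := by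
    rw [show r^2/2 = (r / Real.sqrt 2)^2 by
      rw [div_pow, Real.sq_sqrt (by norm_num : (0:ℝ) ≤ 2)]]
    exact Real.sqrt_sq (by positivity)
  -- arithmetic for the constants
  have hmle : (m:ℝ) ≤ Real.log (2*K^2)/χbar + 1 := (Nat.ceil_lt_add_one hquot0).le
  have hlog2K : Real.log (2*K^2) = Real.log 2 + 2*Real.log K := by
    rw [Real.log_mul two_ne_zero (by positivity), Real.log_pow]; push_cast; ring
  have hlogK0 : 0 ≤ Real.log K := Real.log_nonneg hK
  have h6 : (m:ℝ)*a ≤ a + Real.log 2 * a / χbar + Real.log K * c₂ := by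
    have h7 := mul_le_mul_of_nonneg_right hmle ha0
    rw [hlog2K] at h7
    rw [hc₂]
    have heq7 : ((Real.log 2 + 2*Real.log K)/χbar + 1) * a
        = a + Real.log 2 * a / χbar + 2 * a / χbar * Real.log K := by ring
    have heq8 : Real.log K * (2*a/χbar + 1)
        = 2 * a / χbar * Real.log K + Real.log K := by ring
    rw [heq7] at h7
    rw [heq8]
    linarith
  have hLmle : L ^ m ≤ L * Real.exp (Real.log 2 * a / χbar) * K ^ c₂ := by
    have hexp : (L:ℝ) ^ m = Real.exp ((m:ℝ) * a) := by
      rw [Real.exp_nat_mul, Real.exp_log hL0]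
    calc (L:ℝ) ^ m = Real.exp ((m:ℝ) * a) := hexp
      _ ≤ Real.exp (a + Real.log 2 * a / χbar + Real.log K * c₂) := Real.exp_le_exp.mpr h6
      _ = L * Real.exp (Real.log 2 * a / χbar) * K ^ c₂ := by
          rw [Real.exp_add, Real.exp_add, Real.exp_log hL0,
            Real.rpow_def_of_pos hK0]
  have hKc : (0:ℝ) < K ^ c₂ := Real.rpow_pos_of_pos hK0 _
  have hfinal : (Real.sqrt 2 * L * Real.exp (Real.log 2 * a / χbar))⁻¹ * K ^ (-c₂)
      ≤ r / Real.sqrt 2 := by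
    rw [Real.rpow_neg hK0.le, ← mul_inv, hr,
      show ((L:ℝ)^m)⁻¹ / Real.sqrt 2 = ((L^m) * Real.sqrt 2)⁻¹ by
        rw [mul_inv, div_eq_mul_inv]]
    apply inv_anti₀
    · positivity
    · have h8 : Real.sqrt 2 * (L ^ m) ≤ Real.sqrt 2 *
          (L * Real.exp (Real.log 2 * a / χbar) * K ^ c₂) :=
        mul_le_mul_of_nonneg_left hLmle (Real.sqrt_nonneg 2)
      calc L ^ m * Real.sqrt 2 = Real.sqrt 2 * (L ^ m) := mul_comm _ _
        _ ≤ _ := h8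
        _ = Real.sqrt 2 * L * Real.exp (Real.log 2 * a / χbar) * K ^ c₂ := by ring
  calc (Real.sqrt 2 * L * Real.exp (Real.log 2 * a / χbar))⁻¹ * K ^ (-c₂)
      ≤ r / Real.sqrt 2 := hfinal
    _ = Real.sqrt (r^2/2) := heq.symm
    _ ≤ sinAngle Es Eu := hsin

end
end
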